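/- arXiv:1507.08319 — 3 statements merged into one kernel-verified Lean document; each statement's English description precedes it below -/
import Mathlib

section
/- (Theorem 4.1(i), deterministic core: almost sure innovation bound for EnKF-AI) In the EnKF-AI setting described in the context, for every k = 1,…,K the updated ensemble member satisfies |HV⁽ᵏ⁾ − Z⁽ᵏ⁾| ≤ √K · max{M₁, ρ₀⁻¹c_φ⁻¹}. -/
open Matrix BigOperators

/-- Squared Euclidean norm of a vector. -/
noncomputable def enormSq {ι : Type*} [Fintype ι] (v : ι → ℝ) : ℝ := ∑ i, v i ^ 2

/-- Euclidean norm of a vector. -/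
noncomputable def enorm {ι : Type*} [Fintype ι] (v : ι → ℝ) : ℝ := Real.sqrt (∑ i, v i ^ 2)

/-- The spectral (operator) norm of a real matrix. -/
noncomputable def specNorm {ι κ : Type*} [Fintype ι] [Fintype κ] [DecidableEq κ]
    (M : Matrix ι κ ℝ) : ℝ :=
  ‖LinearMap.toContinuousLinearMap (Matrix.toEuclideanLin M)‖

/-- The adaptive inflation function `φ(x,y) = c_φ · x · (1+y) · 1{x > M₁ or y > M₂}`. -/
noncomputable def adaptiveInflation (cphi M₁ M₂ x y : ℝ) : ℝ :=
  if x > M₁ ∨ y > M₂ then cphi * x * (1 + y) else 0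

/- Auxiliary lemmas -/

lemma aux_sum_mulVec {m n ι : Type*} [Fintype m] [Fintype n] (s : Finset ι)
    (A : ι → Matrix m n ℝ) (v : n → ℝ) :
    (∑ k ∈ s, A k) *ᵥ v = ∑ k ∈ s, (A k) *ᵥ v := by
  ext i
  simp only [Matrix.mulVec, dotProduct, Finset.sum_apply, Matrix.sum_apply,
    Finset.sum_mul]
  exact Finset.sum_comm

lemma aux_vecMulVec_mulVec {m n : Type*} [Fintype m] [Fintype n]
    (a : m → ℝ) (b : n → ℝ) (v : n → ℝ) :
    (Matrix.vecMulVec a b) *ᵥ v = (b ⬝ᵥ v) • a := by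
  ext i
  simp only [Matrix.mulVec, dotProduct, Matrix.vecMulVec_apply, Pi.smul_apply,
    smul_eq_mul, Finset.sum_mul]
  exact Finset.sum_congr rfl fun j _ => by ring

lemma aux_dotProduct_sum {m ι : Type*} [Fintype m] (s : Finset ι) (v : m → ℝ)
    (u : ι → m → ℝ) : v ⬝ᵥ (∑ k ∈ s, u k) = ∑ k ∈ s, v ⬝ᵥ u k := by
  simp only [dotProduct, Finset.sum_apply, Finset.mul_sum]
  exact Finset.sum_comm

/-- The sample covariance quadratic form is nonnegative. -/
lemma aux_quad_nonneg {d ι : Type*} [Fintype d] [Fintype ι] (c : ℝ) (hc : 0 ≤ c)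
    (w : ι → d → ℝ) (y : d → ℝ) :
    0 ≤ y ⬝ᵥ ((c • ∑ k, Matrix.vecMulVec (w k) (w k)) *ᵥ y) := by
  rw [Matrix.smul_mulVec, aux_sum_mulVec, dotProduct_smul, smul_eq_mul]
  refine mul_nonneg hc ?_
  rw [aux_dotProduct_sum]
  refine Finset.sum_nonneg fun k _ => ?_
  rw [aux_vecMulVec_mulVec, dotProduct_smul, smul_eq_mul,
    dotProduct_comm]
  exact mul_self_nonneg _

/-- Cauchy–Schwarz for the Euclidean structure used here. -/
lemma aux_cauchy {m : Type*} [Fintype m] (v w : m → ℝ) :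
    v ⬝ᵥ w ≤ _root_.enorm v * _root_.enorm w := by
  have h1 : (v ⬝ᵥ w) ^ 2 ≤ (∑ i, v i ^ 2) * ∑ i, w i ^ 2 :=
    Finset.sum_mul_sq_le_sq_mul_sq Finset.univ v w
  calc v ⬝ᵥ w ≤ |v ⬝ᵥ w| := le_abs_self _
    _ = Real.sqrt ((v ⬝ᵥ w) ^ 2) := (Real.sqrt_sq_eq_abs _).symm
    _ ≤ Real.sqrt ((∑ i, v i ^ 2) * ∑ i, w i ^ 2) := Real.sqrt_le_sqrt h1
    _ = _root_.enorm v * _root_.enorm w := by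
        rw [_root_.enorm, _root_.enorm, ← Real.sqrt_mul (Finset.sum_nonneg fun i _ => sq_nonneg _)]

lemma aux_dot_self {m : Type*} [Fintype m] (v : m → ℝ) : v ⬝ᵥ v = ∑ i, v i ^ 2 := by
  simp [dotProduct, sq]

/-- **Theorem 4.1(i), deterministic core: almost sure innovation bound for EnKF-AI.**
The state space `ℝ^d` is modelled as `(Fin q ⊕ Fin p) → ℝ` (observed components indexed by
`Fin q`, unobserved by `Fin p`, `d = q + p`); `H = (H₀, 0)` with `H₀ = diag(h₁,…,h_q)`,
`h_i > 0`, and `ρ₀` is the minimum eigenvalue of `H₀H₀ᵀ`, i.e. the least element of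
`{h_i²}`. Given the forecast ensemble `V̂⁽ᵏ⁾`, perturbed observations `Z⁽ᵏ⁾`, statistics
`Θ, Ξ`, inflation strength `λ ≥ φ(Θ,Ξ)` and inflated covariance `C̃ = Ĉ + λI`, the
EnKF-AI analysis members `V⁽ᵏ⁾ = V̂⁽ᵏ⁾ − C̃Hᵀ(I + HC̃Hᵀ)⁻¹(HV̂⁽ᵏ⁾ − Z⁽ᵏ⁾)` satisfy
`|HV⁽ᵏ⁾ − Z⁽ᵏ⁾| ≤ √K · max {M₁, ρ₀⁻¹ c_φ⁻¹}`. -/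
theorem enkf_ai_innovation_bound {q p K : ℕ} (hK : 2 ≤ K)
    (h : Fin q → ℝ) (hpos : ∀ i, 0 < h i)
    (H : Matrix (Fin q) (Fin q ⊕ Fin p) ℝ)
    (hH : H = Matrix.fromCols (Matrix.diagonal h) 0)
    (ρ₀ : ℝ) (hρ₀ : IsLeast (Set.range fun i => h i ^ 2) ρ₀)
    (cphi M₁ M₂ : ℝ) (hcphi : 0 < cphi) (hM₁ : 0 < M₁) (hM₂ : 0 < M₂)
    (Vhat : Fin K → (Fin q ⊕ Fin p) → ℝ) (Z : Fin K → Fin q → ℝ)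
    (Vbar : (Fin q ⊕ Fin p) → ℝ) (hVbar : Vbar = (K : ℝ)⁻¹ • ∑ k, Vhat k)
    (Chat : Matrix (Fin q ⊕ Fin p) (Fin q ⊕ Fin p) ℝ)
    (hChat : Chat = ((K : ℝ) - 1)⁻¹ • ∑ k, vecMulVec (Vhat k - Vbar) (Vhat k - Vbar))
    (Bhat : Matrix (Fin q) (Fin p) ℝ)
    (hBhat : Bhat = ((K : ℝ) - 1)⁻¹ •
      ∑ k, vecMulVec (fun i => (Vhat k - Vbar) (Sum.inl i)) (fun j => (Vhat k - Vbar) (Sum.inr j)))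
    (Θ Ξ : ℝ)
    (hΘ : Θ = Real.sqrt ((K : ℝ)⁻¹ * ∑ k, enormSq (H.mulVec (Vhat k) - Z k)))
    (hΞ : Ξ = specNorm Bhat)
    (lam : ℝ) (hlam0 : 0 ≤ lam) (hlam : adaptiveInflation cphi M₁ M₂ Θ Ξ ≤ lam)
    (Ctil : Matrix (Fin q ⊕ Fin p) (Fin q ⊕ Fin p) ℝ) (hCtil : Ctil = Chat + lam • 1)
    (V : Fin K → (Fin q ⊕ Fin p) → ℝ)
    (hV : ∀ k, V k = Vhat k
      - (Ctil * Hᵀ * (1 + H * Ctil * Hᵀ)⁻¹).mulVec (H.mulVec (Vhat k) - Z k)) :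
    ∀ k, _root_.enorm (H.mulVec (V k) - Z k) ≤ Real.sqrt K * max M₁ (ρ₀⁻¹ * cphi⁻¹) := by
  intro k
  -- basic positivity facts
  obtain ⟨⟨i₀, hi₀⟩, hρlb⟩ := hρ₀
  have hρpos : 0 < ρ₀ := by rw [← hi₀]; exact pow_pos (hpos i₀) 2
  have hKpos : (0:ℝ) < K := by
    have : 0 < K := lt_of_lt_of_le (by norm_num) hK
    exact_mod_cast this
  have hK1 : (0:ℝ) ≤ ((K:ℝ) - 1)⁻¹ := by
    have h2K : (2:ℝ) ≤ K := by exact_mod_cast hK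
    have : (0:ℝ) ≤ (K:ℝ) - 1 := by linarith
    positivity
  set S : Matrix (Fin q) (Fin q) ℝ := H * Ctil * Hᵀ with hS
  set e : Fin q → ℝ := H *ᵥ Vhat k - Z k with he
  -- quadratic lower bound for S
  have hquad : ∀ x : Fin q → ℝ, lam * ρ₀ * (x ⬝ᵥ x) ≤ x ⬝ᵥ (S *ᵥ x) := by
    intro x
    have hSx : S *ᵥ x = H *ᵥ (Ctil *ᵥ (Hᵀ *ᵥ x)) := by
      rw [hS, Matrix.mulVec_mulVec, Matrix.mulVec_mulVec]
    have hdx : x ⬝ᵥ (S *ᵥ x) = (Hᵀ *ᵥ x) ⬝ᵥ (Ctil *ᵥ (Hᵀ *ᵥ x)) := by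
      rw [hSx, Matrix.dotProduct_mulVec, ← Matrix.mulVec_transpose]
    set y := Hᵀ *ᵥ x with hy
    rw [hdx, hCtil, Matrix.add_mulVec, dotProduct_add, Matrix.smul_mulVec,
      Matrix.one_mulVec, dotProduct_smul, smul_eq_mul]
    have h1 : 0 ≤ y ⬝ᵥ (Chat *ᵥ y) := by
      rw [hChat]; exact aux_quad_nonneg _ hK1 _ y
    have h2 : ρ₀ * (x ⬝ᵥ x) ≤ y ⬝ᵥ y := by
      have hy' : y = Sum.elim (fun i => h i * x i) 0 := by
        rw [hy, hH, Matrix.transpose_fromCols, Matrix.diagonal_transpose,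
          Matrix.transpose_zero, Matrix.fromRows_mulVec, Matrix.zero_mulVec]
        have hd : Matrix.diagonal h *ᵥ x = fun i => h i * x i := by
          ext i; exact Matrix.mulVec_diagonal h x i
        rw [hd]
      rw [hy', sumElim_dotProduct_sumElim, zero_dotProduct, add_zero]
      have hmul : ρ₀ * (x ⬝ᵥ x) = ∑ i, ρ₀ * (x i * x i) := by
        rw [dotProduct, Finset.mul_sum]
      rw [hmul, dotProduct]
      refine Finset.sum_le_sum fun i _ => ?_
      have hle : ρ₀ ≤ h i ^ 2 := hρlb ⟨i, rfl⟩
      calc ρ₀ * (x i * x i) ≤ h i ^ 2 * (x i * x i) :=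
            mul_le_mul_of_nonneg_right hle (mul_self_nonneg _)
        _ = h i * x i * (h i * x i) := by ring
    have h3 := mul_le_mul_of_nonneg_left h2 hlam0
    rw [← mul_assoc] at h3
    linarith
  -- symmetry
  have hChatT : Chatᵀ = Chat := by
    rw [hChat, Matrix.transpose_smul, Matrix.transpose_sum]
    congr 1
    refine Finset.sum_congr rfl fun j _ => ?_
    ext a b
    simp [Matrix.transpose_apply, Matrix.vecMulVec_apply, mul_comm]
  have hCtilT : Ctilᵀ = Ctil := by
    rw [hCtil, Matrix.transpose_add, hChatT, Matrix.transpose_smul, Matrix.transpose_one]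
  have hST : Sᵀ = S := by
    rw [hS, Matrix.transpose_mul, Matrix.transpose_mul, Matrix.transpose_transpose, hCtilT,
      ← Matrix.mul_assoc]
  -- positive definiteness of 1 + S
  have hpd : (1 + S).PosDef := by
    refine Matrix.posDef_iff_dotProduct_mulVec.mpr ⟨?_, ?_⟩
    · show (1 + S)ᴴ = 1 + S
      have hconj : Sᴴ = Sᵀ := by
        ext a b; simp [Matrix.conjTranspose_apply]
      rw [Matrix.conjTranspose_add, Matrix.conjTranspose_one, hconj, hST]
    · intro x hx
      have hsx : star x = x := funext fun i => star_trivial (x i)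
      rw [hsx, Matrix.add_mulVec, Matrix.one_mulVec, dotProduct_add]
      have hxx : 0 < x ⬝ᵥ x := by
        rcases lt_or_eq_of_le (by rw [aux_dot_self]; positivity :
            (0:ℝ) ≤ x ⬝ᵥ x) with h' | h'
        · exact h'
        · exact absurd (dotProduct_self_eq_zero.mp h'.symm) hx
      have h4 := hquad x
      have h5 : 0 ≤ lam * ρ₀ * (x ⬝ᵥ x) := by positivity
      linarith
  have hdet : IsUnit (1 + S).det := (Matrix.isUnit_iff_isUnit_det _).mp hpd.isUnit
  have hinv : (1 + S) * (1 + S)⁻¹ = 1 := Matrix.mul_nonsing_inv _ hdet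
  set N : Matrix (Fin q) (Fin q) ℝ := (1 + S)⁻¹ with hN
  have hSN : S * N = 1 - N := by
    have h1 : N + S * N = 1 := by
      have h2 := hinv
      rwa [add_mul, one_mul] at h2
    exact eq_sub_of_add_eq' h1
  -- the innovation identity
  have hinno : H *ᵥ V k - Z k = N *ᵥ e := by
    rw [hV k, Matrix.mulVec_sub, Matrix.mulVec_mulVec]
    have hm : H * (Ctil * Hᵀ * N) = S * N := by
      rw [hS, ← Matrix.mul_assoc, ← Matrix.mul_assoc]
    rw [hm, hSN, Matrix.sub_mulVec, Matrix.one_mulVec, he]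
    abel
  show _root_.enorm (H *ᵥ V k - Z k) ≤ _
  rw [hinno]
  set w : Fin q → ℝ := N *ᵥ e with hw
  have hEe : (1 + S) *ᵥ w = e := by
    rw [hw, Matrix.mulVec_mulVec, hinv, Matrix.one_mulVec]
  -- key quantitative inequality
  have hkey : (1 + lam * ρ₀) * (w ⬝ᵥ w) ≤ w ⬝ᵥ e := by
    have h1 : w ⬝ᵥ e = w ⬝ᵥ w + w ⬝ᵥ (S *ᵥ w) := by
      rw [← hEe, Matrix.add_mulVec, Matrix.one_mulVec, dotProduct_add]
    have hL : (1 + lam * ρ₀) * (w ⬝ᵥ w) = w ⬝ᵥ w + lam * ρ₀ * (w ⬝ᵥ w) := by ring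
    rw [hL, h1]
    linarith [hquad w]
  have hCS : w ⬝ᵥ e ≤ _root_.enorm w * _root_.enorm e := aux_cauchy w e
  have hwsq : w ⬝ᵥ w = _root_.enorm w * _root_.enorm w := by
    rw [aux_dot_self, _root_.enorm]
    exact (Real.mul_self_sqrt (Finset.sum_nonneg fun i _ => sq_nonneg _)).symm
  -- bound on the forecast innovation
  have hΘ0 : 0 ≤ Θ := hΘ ▸ Real.sqrt_nonneg _
  have henorme : _root_.enorm e ≤ Real.sqrt K * Θ := by
    have hTk : ∑ i, e i ^ 2 ≤ ∑ j, enormSq (H *ᵥ Vhat j - Z j) := by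
      have := Finset.single_le_sum
        (f := fun j => enormSq (H *ᵥ Vhat j - Z j))
        (fun j _ => Finset.sum_nonneg fun i _ => sq_nonneg _) (Finset.mem_univ k)
      simpa [enormSq, he] using this
    have hrhs : Real.sqrt K * Θ
        = Real.sqrt (∑ j, enormSq (H *ᵥ Vhat j - Z j)) := by
      rw [hΘ, ← Real.sqrt_mul hKpos.le, ← mul_assoc,
        mul_inv_cancel₀ (ne_of_gt hKpos), one_mul]
    rw [_root_.enorm, hrhs]
    exact Real.sqrt_le_sqrt hTk
  -- right-hand side is nonnegative
  have hrhs0 : 0 ≤ Real.sqrt K * max M₁ (ρ₀⁻¹ * cphi⁻¹) :=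
    mul_nonneg (Real.sqrt_nonneg _) (le_trans hM₁.le (le_max_left _ _))
  by_cases hw0 : _root_.enorm w = 0
  · rw [hw0]; exact hrhs0
  have hwpos : 0 < _root_.enorm w := lt_of_le_of_ne (Real.sqrt_nonneg _) (Ne.symm hw0)
  have h3 : (1 + lam * ρ₀) * _root_.enorm w ≤ _root_.enorm e := by
    refine le_of_mul_le_mul_right ?_ hwpos
    calc (1 + lam * ρ₀) * _root_.enorm w * _root_.enorm w
        = (1 + lam * ρ₀) * (w ⬝ᵥ w) := by rw [hwsq]; ring
      _ ≤ w ⬝ᵥ e := hkey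
      _ ≤ _root_.enorm w * _root_.enorm e := hCS
      _ = _root_.enorm e * _root_.enorm w := by ring
  by_cases hcase : Θ ≤ M₁
  · -- small-Θ case: no inflation needed
    have hlr0 : 0 ≤ lam * ρ₀ * _root_.enorm w :=
      mul_nonneg (mul_nonneg hlam0 hρpos.le) hwpos.le
    have h5 : _root_.enorm w ≤ _root_.enorm e := by nlinarith [h3]
    calc _root_.enorm w ≤ _root_.enorm e := h5
      _ ≤ Real.sqrt K * Θ := henorme
      _ ≤ Real.sqrt K * M₁ :=
          mul_le_mul_of_nonneg_left hcase (Real.sqrt_nonneg _)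
      _ ≤ Real.sqrt K * max M₁ (ρ₀⁻¹ * cphi⁻¹) :=
          mul_le_mul_of_nonneg_left (le_max_left _ _) (Real.sqrt_nonneg _)
  · -- large-Θ case: inflation is active
    have hΘM : M₁ < Θ := lt_of_not_ge hcase
    have hΘpos : 0 < Θ := lt_trans hM₁ hΘM
    have hφ : adaptiveInflation cphi M₁ M₂ Θ Ξ = cphi * Θ * (1 + Ξ) := by
      simp only [adaptiveInflation]
      rw [if_pos (Or.inl hΘM)]
    have hΞ0 : 0 ≤ Ξ := by rw [hΞ]; exact norm_nonneg _
    have hlam2 : cphi * Θ ≤ lam := by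
      have h6 : cphi * Θ ≤ cphi * Θ * (1 + Ξ) :=
        le_mul_of_one_le_right (by positivity) (by linarith)
      rw [hφ] at hlam
      linarith
    have hden : 0 < cphi * Θ * ρ₀ := by positivity
    have hden2 : cphi * Θ * ρ₀ ≤ 1 + lam * ρ₀ := by
      have := mul_le_mul_of_nonneg_right hlam2 hρpos.le
      linarith
    have h7 : _root_.enorm w ≤ _root_.enorm e / (1 + lam * ρ₀) := by
      rw [le_div_iff₀ (lt_of_lt_of_le hden hden2)]
      calc _root_.enorm w * (1 + lam * ρ₀) = (1 + lam * ρ₀) * _root_.enorm w := by ring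
        _ ≤ _root_.enorm e := h3
    have h8 : _root_.enorm e / (1 + lam * ρ₀) ≤ Real.sqrt K * Θ / (cphi * Θ * ρ₀) :=
      div_le_div₀ (mul_nonneg (Real.sqrt_nonneg _) hΘ0) henorme hden hden2
    have h9 : Real.sqrt K * Θ / (cphi * Θ * ρ₀) = Real.sqrt K * (ρ₀⁻¹ * cphi⁻¹) := by
      field_simp
    calc _root_.enorm w ≤ _root_.enorm e / (1 + lam * ρ₀) := h7
      _ ≤ Real.sqrt K * Θ / (cphi * Θ * ρ₀) := h8
      _ = Real.sqrt K * (ρ₀⁻¹ * cphi⁻¹) := h9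
      _ ≤ Real.sqrt K * max M₁ (ρ₀⁻¹ * cphi⁻¹) :=
          mul_le_mul_of_nonneg_left (le_max_right _ _) (Real.sqrt_nonneg _)
end

section
/- (Cross-covariance gain bound in the EnKF-AI update) In the EnKF-AI setting described in the context, writing C̃^X = Ĉ^X + λI_q for the observed block of the inflated covariance, for every k = 1,…,K one has |B̂ᵀH₀ᵀ(I_q + H₀C̃^X H₀ᵀ)⁻¹(H₀X̂⁽ᵏ⁾ − Z⁽ᵏ⁾)|² ≤ K·‖H₀‖²·max{M₁²M₂², ρ₀⁻²c_φ⁻²}. -/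
open Matrix BigOperators

section Helpers

variable {ι κ : Type*} [Fintype ι] [Fintype κ]

lemma enormSq_nonneg (v : ι → ℝ) : 0 ≤ enormSq v :=
  Finset.sum_nonneg fun _ _ => sq_nonneg _

lemma sqrt_enormSq_sq (v : ι → ℝ) : Real.sqrt (enormSq v) ^ 2 = enormSq v :=
  Real.sq_sqrt (enormSq_nonneg v)

lemma enormSq_eq_dot (v : ι → ℝ) : enormSq v = v ⬝ᵥ v := by
  simp [enormSq, dotProduct, sq]

lemma enormSq_eq_zero_iff (v : ι → ℝ) : enormSq v = 0 ↔ v = 0 := by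
  constructor
  · intro h0
    funext i
    have := (Finset.sum_eq_zero_iff_of_nonneg (fun i _ => sq_nonneg (v i))).1 h0 i
      (Finset.mem_univ i)
    exact pow_eq_zero_iff two_ne_zero |>.1 this
  · intro h0; simp [h0, enormSq]

lemma dot_le (v w : ι → ℝ) : v ⬝ᵥ w ≤ Real.sqrt (enormSq v) * Real.sqrt (enormSq w) := by
  have h : (v ⬝ᵥ w) ^ 2 ≤ enormSq v * enormSq w :=
    Finset.sum_mul_sq_le_sq_mul_sq Finset.univ v w
  calc v ⬝ᵥ w ≤ |v ⬝ᵥ w| := le_abs_self _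
    _ = Real.sqrt ((v ⬝ᵥ w) ^ 2) := (Real.sqrt_sq_eq_abs _).symm
    _ ≤ Real.sqrt (enormSq v * enormSq w) := Real.sqrt_le_sqrt h
    _ = _ := Real.sqrt_mul (enormSq_nonneg v) _

lemma sq_cancel {t c : ℝ} (ht : 0 ≤ t) (hc : 0 ≤ c) (h : t ^ 2 ≤ c * t) : t ≤ c := by
  rcases eq_or_lt_of_le ht with h0 | h0
  · rw [← h0]; exact hc
  · nlinarith

lemma norm_symm_equiv (v : ι → ℝ) :
    ‖(WithLp.equiv 2 (ι → ℝ)).symm v‖ = Real.sqrt (enormSq v) := by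
  rw [EuclideanSpace.norm_eq]
  congr 1
  simp [enormSq, Real.norm_eq_abs, sq_abs]

lemma specNorm_nonneg [DecidableEq κ] (M : Matrix ι κ ℝ) : 0 ≤ specNorm M := norm_nonneg _

lemma mulVec_norm_le [DecidableEq κ] (M : Matrix ι κ ℝ) (v : κ → ℝ) :
    Real.sqrt (enormSq (M *ᵥ v)) ≤ specNorm M * Real.sqrt (enormSq v) := by
  have h := (LinearMap.toContinuousLinearMap (Matrix.toEuclideanLin M)).le_opNorm
      ((WithLp.equiv 2 (κ → ℝ)).symm v)
  have e1 : (LinearMap.toContinuousLinearMap (Matrix.toEuclideanLin M))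
      ((WithLp.equiv 2 (κ → ℝ)).symm v) = (WithLp.equiv 2 (ι → ℝ)).symm (M *ᵥ v) := by
    rfl
  rw [e1, norm_symm_equiv, norm_symm_equiv] at h
  exact h

lemma dot_mulVec_left (M : Matrix ι κ ℝ) (x : ι → ℝ) (z : κ → ℝ) :
    x ⬝ᵥ (M *ᵥ z) = (Mᵀ *ᵥ x) ⬝ᵥ z := by
  rw [Matrix.dotProduct_mulVec]
  congr 1
  rw [← Matrix.vecMul_transpose, Matrix.transpose_transpose]

lemma transpose_mulVec_le [DecidableEq κ] (M : Matrix ι κ ℝ) (w : ι → ℝ) :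
    Real.sqrt (enormSq (Mᵀ *ᵥ w)) ≤ specNorm M * Real.sqrt (enormSq w) := by
  apply sq_cancel (Real.sqrt_nonneg _)
    (mul_nonneg (specNorm_nonneg M) (Real.sqrt_nonneg _))
  have key : enormSq (Mᵀ *ᵥ w) = w ⬝ᵥ (M *ᵥ (Mᵀ *ᵥ w)) := by
    rw [enormSq_eq_dot, dot_mulVec_left M w (Mᵀ *ᵥ w)]
  calc Real.sqrt (enormSq (Mᵀ *ᵥ w)) ^ 2 = enormSq (Mᵀ *ᵥ w) := sqrt_enormSq_sq _
    _ = w ⬝ᵥ (M *ᵥ (Mᵀ *ᵥ w)) := key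
    _ ≤ Real.sqrt (enormSq w) * Real.sqrt (enormSq (M *ᵥ (Mᵀ *ᵥ w))) := dot_le _ _
    _ ≤ Real.sqrt (enormSq w) * (specNorm M * Real.sqrt (enormSq (Mᵀ *ᵥ w))) :=
        mul_le_mul_of_nonneg_left (mulVec_norm_le M _) (Real.sqrt_nonneg _)
    _ = specNorm M * Real.sqrt (enormSq w) * Real.sqrt (enormSq (Mᵀ *ᵥ w)) := by ring

lemma inv_mulVec_le {n : Type*} [Fintype n] [DecidableEq n] (S : Matrix n n ℝ) (α : ℝ)
    (hα : 0 < α) (hquad : ∀ x, α * enormSq x ≤ x ⬝ᵥ (S *ᵥ x)) (v : n → ℝ) :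
    Real.sqrt (enormSq (S⁻¹ *ᵥ v)) ≤ α⁻¹ * Real.sqrt (enormSq v) := by
  have hdet : IsUnit S.det := by
    rw [isUnit_iff_ne_zero]
    intro h0
    obtain ⟨x, hx0, hx⟩ := (Matrix.exists_mulVec_eq_zero_iff).2 h0
    have h1 := hquad x
    rw [hx] at h1
    simp only [dotProduct_zero] at h1
    have hx2 : enormSq x ≤ 0 := by nlinarith [enormSq_nonneg x]
    exact hx0 ((enormSq_eq_zero_iff x).1 (le_antisymm hx2 (enormSq_nonneg x)))
  have hSu : S *ᵥ (S⁻¹ *ᵥ v) = v := by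
    rw [Matrix.mulVec_mulVec, Matrix.mul_nonsing_inv S hdet, Matrix.one_mulVec]
  set u := S⁻¹ *ᵥ v with hu
  apply sq_cancel (Real.sqrt_nonneg _)
    (mul_nonneg (inv_nonneg.2 hα.le) (Real.sqrt_nonneg _))
  have h1 : α * Real.sqrt (enormSq u) ^ 2 ≤ Real.sqrt (enormSq u) * Real.sqrt (enormSq v) := by
    rw [sqrt_enormSq_sq]
    calc α * enormSq u ≤ u ⬝ᵥ (S *ᵥ u) := hquad u
      _ = u ⬝ᵥ v := by rw [hSu]
      _ ≤ _ := dot_le u v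
  have h2 := mul_le_mul_of_nonneg_left h1 (inv_nonneg.2 hα.le)
  calc Real.sqrt (enormSq u) ^ 2 = α⁻¹ * (α * Real.sqrt (enormSq u) ^ 2) := by
        field_simp
    _ ≤ α⁻¹ * (Real.sqrt (enormSq u) * Real.sqrt (enormSq v)) := h2
    _ = α⁻¹ * Real.sqrt (enormSq v) * Real.sqrt (enormSq u) := by ring

lemma sum_mulVec' {α : Type*} [Fintype α] (f : α → Matrix ι κ ℝ) (y : κ → ℝ) :
    (∑ k, f k) *ᵥ y = ∑ k, (f k *ᵥ y) := by
  ext i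
  simp [Matrix.mulVec, dotProduct, Matrix.sum_apply, Finset.sum_mul]
  rw [Finset.sum_comm]

lemma dot_sum (y : ι → ℝ) {α : Type*} [Fintype α] (w : α → ι → ℝ) :
    y ⬝ᵥ (∑ k, w k) = ∑ k, y ⬝ᵥ w k := by
  simp [dotProduct, Finset.sum_apply, Finset.mul_sum]
  rw [Finset.sum_comm]

lemma dot_vecMulVec (a b y : ι → ℝ) :
    y ⬝ᵥ (Matrix.vecMulVec a b *ᵥ y) = (a ⬝ᵥ y) * (b ⬝ᵥ y) := by
  simp only [dotProduct, Matrix.mulVec, Matrix.vecMulVec_apply, Finset.sum_mul,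
    Finset.mul_sum]
  rw [Finset.sum_comm]
  apply Finset.sum_congr rfl
  intro i _
  apply Finset.sum_congr rfl
  intro j _
  ring

end Helpers

set_option maxHeartbeats 1000000 in
/-- **Cross-covariance gain bound in the EnKF-AI update.** In the EnKF-AI setting
(state space `(Fin q ⊕ Fin p) → ℝ`, `H = (H₀, 0)`, `H₀ = diag(h)` with `h_i > 0`, `ρ₀`
the minimum eigenvalue of `H₀H₀ᵀ`), with `C̃^X = Ĉ^X + λ I_q` the observed block of the
inflated covariance and `λ ≥ φ(Θ,Ξ)`, one has for every `k`
`|B̂ᵀH₀ᵀ(I + H₀C̃^X H₀ᵀ)⁻¹(H₀X̂⁽ᵏ⁾ − Z⁽ᵏ⁾)|² ≤ K‖H₀‖² max {M₁²M₂², ρ₀⁻²c_φ⁻²}`. -/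
theorem enkf_ai_cross_covariance_gain_bound {q p K : ℕ} (hK : 2 ≤ K)
    (h : Fin q → ℝ) (hpos : ∀ i, 0 < h i)
    (H0 : Matrix (Fin q) (Fin q) ℝ) (hH0 : H0 = Matrix.diagonal h)
    (H : Matrix (Fin q) (Fin q ⊕ Fin p) ℝ) (hH : H = Matrix.fromCols H0 0)
    (ρ₀ : ℝ) (hρ₀ : IsLeast (Set.range fun i => h i ^ 2) ρ₀)
    (cphi M₁ M₂ : ℝ) (hcphi : 0 < cphi) (hM₁ : 0 < M₁) (hM₂ : 0 < M₂)
    (Vhat : Fin K → (Fin q ⊕ Fin p) → ℝ) (Z : Fin K → Fin q → ℝ)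
    (Xhat : Fin K → Fin q → ℝ) (hXhat : ∀ k, Xhat k = fun i => Vhat k (Sum.inl i))
    (Yhat : Fin K → Fin p → ℝ) (hYhat : ∀ k, Yhat k = fun j => Vhat k (Sum.inr j))
    (Xbar : Fin q → ℝ) (hXbar : Xbar = (K : ℝ)⁻¹ • ∑ k, Xhat k)
    (Ybar : Fin p → ℝ) (hYbar : Ybar = (K : ℝ)⁻¹ • ∑ k, Yhat k)
    (ChatX : Matrix (Fin q) (Fin q) ℝ)
    (hChatX : ChatX = ((K : ℝ) - 1)⁻¹ • ∑ k, vecMulVec (Xhat k - Xbar) (Xhat k - Xbar))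
    (Bhat : Matrix (Fin q) (Fin p) ℝ)
    (hBhat : Bhat = ((K : ℝ) - 1)⁻¹ • ∑ k, vecMulVec (Xhat k - Xbar) (Yhat k - Ybar))
    (Θ Ξ : ℝ)
    (hΘ : Θ = Real.sqrt ((K : ℝ)⁻¹ * ∑ k, enormSq (H.mulVec (Vhat k) - Z k)))
    (hΞ : Ξ = specNorm Bhat)
    (lam : ℝ) (hlam0 : 0 ≤ lam) (hlam : adaptiveInflation cphi M₁ M₂ Θ Ξ ≤ lam)
    (CtilX : Matrix (Fin q) (Fin q) ℝ) (hCtilX : CtilX = ChatX + lam • 1) :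
    ∀ k, enormSq ((Bhatᵀ * H0ᵀ * (1 + H0 * CtilX * H0ᵀ)⁻¹).mulVec
        (H0.mulVec (Xhat k) - Z k))
      ≤ (K : ℝ) * specNorm H0 ^ 2 * max (M₁ ^ 2 * M₂ ^ 2) (ρ₀⁻¹ ^ 2 * cphi⁻¹ ^ 2) := by
  obtain ⟨i0, hi0⟩ := hρ₀.1
  have hρpos : 0 < ρ₀ := hi0 ▸ pow_pos (hpos i0) 2
  have hρle : ∀ i, ρ₀ ≤ h i ^ 2 := fun i => hρ₀.2 ⟨i, rfl⟩
  have hΘnn : 0 ≤ Θ := hΘ ▸ Real.sqrt_nonneg _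
  have hΞnn : 0 ≤ Ξ := hΞ ▸ specNorm_nonneg _
  have hK2 : (2 : ℝ) ≤ (K : ℝ) := by exact_mod_cast hK
  have hKpos : (0 : ℝ) < (K : ℝ) := by linarith
  have hKm1 : (0 : ℝ) ≤ ((K : ℝ) - 1)⁻¹ := by
    have h1 : (1 : ℝ) ≤ (K : ℝ) - 1 := by linarith
    positivity
  have hdpos : (0 : ℝ) < 1 + lam * ρ₀ := by nlinarith [mul_nonneg hlam0 hρpos.le]
  -- quadratic form lower bound
  have hHy : ∀ x : Fin q → ℝ, H0ᵀ *ᵥ x = fun i => h i * x i := by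
    intro x; funext i
    rw [hH0, Matrix.diagonal_transpose]
    exact Matrix.mulVec_diagonal h x i
  have hquad : ∀ x : Fin q → ℝ,
      (1 + lam * ρ₀) * enormSq x ≤ x ⬝ᵥ ((1 + H0 * CtilX * H0ᵀ) *ᵥ x) := by
    intro x
    have e1 : x ⬝ᵥ ((1 + H0 * CtilX * H0ᵀ) *ᵥ x)
        = enormSq x + (H0ᵀ *ᵥ x) ⬝ᵥ (CtilX *ᵥ (H0ᵀ *ᵥ x)) := by
      rw [Matrix.add_mulVec, Matrix.one_mulVec, dotProduct_add, enormSq_eq_dot]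
      congr 1
      rw [show (H0 * CtilX * H0ᵀ) *ᵥ x = H0 *ᵥ (CtilX *ᵥ (H0ᵀ *ᵥ x)) by
        rw [Matrix.mulVec_mulVec, Matrix.mulVec_mulVec]]
      rw [dot_mulVec_left]
    have e2 : (H0ᵀ *ᵥ x) ⬝ᵥ (CtilX *ᵥ (H0ᵀ *ᵥ x))
        = (H0ᵀ *ᵥ x) ⬝ᵥ (ChatX *ᵥ (H0ᵀ *ᵥ x)) + lam * ((H0ᵀ *ᵥ x) ⬝ᵥ (H0ᵀ *ᵥ x)) := by
      rw [hCtilX, Matrix.add_mulVec, dotProduct_add, Matrix.smul_mulVec,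
        Matrix.one_mulVec, dotProduct_smul]
      simp [smul_eq_mul]
    have e3 : 0 ≤ (H0ᵀ *ᵥ x) ⬝ᵥ (ChatX *ᵥ (H0ᵀ *ᵥ x)) := by
      rw [hChatX, Matrix.smul_mulVec, dotProduct_smul, sum_mulVec', dot_sum]
      refine smul_nonneg hKm1 (Finset.sum_nonneg fun k _ => ?_)
      rw [dot_vecMulVec]
      exact mul_self_nonneg _
    have e4 : ρ₀ * enormSq x ≤ (H0ᵀ *ᵥ x) ⬝ᵥ (H0ᵀ *ᵥ x) := by
      rw [← enormSq_eq_dot]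
      have e5 : enormSq (H0ᵀ *ᵥ x) = ∑ i, h i ^ 2 * x i ^ 2 := by
        rw [hHy x]; simp [enormSq, mul_pow]
      rw [e5, enormSq, Finset.mul_sum]
      exact Finset.sum_le_sum fun i _ => mul_le_mul_of_nonneg_right (hρle i) (sq_nonneg _)
    have e6 : lam * (ρ₀ * enormSq x) ≤ lam * ((H0ᵀ *ᵥ x) ⬝ᵥ (H0ᵀ *ᵥ x)) :=
      mul_le_mul_of_nonneg_left e4 hlam0
    rw [e1, e2]
    nlinarith [enormSq_nonneg x]
  -- residual bound
  have hres : ∀ j, H *ᵥ Vhat j = H0 *ᵥ Xhat j := by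
    intro j
    have hV : Vhat j = Sum.elim (Xhat j) (Yhat j) := by
      funext x
      cases x with
      | inl i => simp [hXhat j]
      | inr i => simp [hYhat j]
    rw [hH, hV]; ext i; simp [Matrix.mulVec, dotProduct, Fintype.sum_sum_type]
  have hΘsq : Θ ^ 2 = (K : ℝ)⁻¹ * ∑ j, enormSq (H0 *ᵥ Xhat j - Z j) := by
    rw [hΘ, Real.sq_sqrt]
    · congr 1
      exact Finset.sum_congr rfl fun j _ => by rw [hres j]
    · exact mul_nonneg (inv_nonneg.2 hKpos.le)
        (Finset.sum_nonneg fun j _ => enormSq_nonneg _)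
  have hrk : ∀ j, Real.sqrt (enormSq (H0 *ᵥ Xhat j - Z j)) ≤ Real.sqrt (K : ℝ) * Θ := by
    intro j
    have h1 : enormSq (H0 *ᵥ Xhat j - Z j) ≤ (K : ℝ) * Θ ^ 2 := by
      rw [hΘsq, ← mul_assoc, mul_inv_cancel₀ (ne_of_gt hKpos), one_mul]
      exact Finset.single_le_sum (f := fun j => enormSq (H0 *ᵥ Xhat j - Z j))
        (fun j _ => enormSq_nonneg _) (Finset.mem_univ j)
    calc Real.sqrt (enormSq (H0 *ᵥ Xhat j - Z j)) ≤ Real.sqrt ((K : ℝ) * Θ ^ 2) :=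
          Real.sqrt_le_sqrt h1
      _ = Real.sqrt (K : ℝ) * Θ := by
          rw [Real.sqrt_mul hKpos.le, Real.sqrt_sq hΘnn]
  -- the D bound
  have hαnn : (0 : ℝ) ≤ (1 + lam * ρ₀)⁻¹ := inv_nonneg.2 hdpos.le
  have hDnn : 0 ≤ Ξ * Θ * (1 + lam * ρ₀)⁻¹ :=
    mul_nonneg (mul_nonneg hΞnn hΘnn) hαnn
  have hDsq : (Ξ * Θ * (1 + lam * ρ₀)⁻¹) ^ 2
      ≤ max (M₁ ^ 2 * M₂ ^ 2) (ρ₀⁻¹ ^ 2 * cphi⁻¹ ^ 2) := by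
    by_cases hcase : Θ > M₁ ∨ Ξ > M₂
    · have hφ : cphi * Θ * (1 + Ξ) ≤ lam := by
        have h2 := hlam
        unfold adaptiveInflation at h2
        rwa [if_pos hcase] at h2
      have hD2 : Ξ * Θ * (1 + lam * ρ₀)⁻¹ ≤ ρ₀⁻¹ * cphi⁻¹ := by
        rw [← div_eq_mul_inv, ← mul_inv, ← one_div,
          div_le_div_iff₀ hdpos (by positivity)]
        have h1 : cphi * Θ * (1 + Ξ) * ρ₀ ≤ lam * ρ₀ :=
          mul_le_mul_of_nonneg_right hφ hρpos.le
        nlinarith [mul_nonneg (mul_nonneg hcphi.le hΘnn) hρpos.le]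
      refine le_trans ?_ (le_max_right _ _)
      calc (Ξ * Θ * (1 + lam * ρ₀)⁻¹) ^ 2 ≤ (ρ₀⁻¹ * cphi⁻¹) ^ 2 :=
            pow_le_pow_left₀ hDnn hD2 2
        _ = ρ₀⁻¹ ^ 2 * cphi⁻¹ ^ 2 := by ring
    · push_neg at hcase
      obtain ⟨hΘle, hΞle⟩ := hcase
      have hinv1 : (1 + lam * ρ₀)⁻¹ ≤ 1 :=
        inv_le_one_of_one_le₀ (by nlinarith [mul_nonneg hlam0 hρpos.le])
      have hD1 : Ξ * Θ * (1 + lam * ρ₀)⁻¹ ≤ M₁ * M₂ := by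
        have h1 : Ξ * Θ ≤ M₂ * M₁ := mul_le_mul hΞle hΘle hΘnn hM₂.le
        have h2 : Ξ * Θ * (1 + lam * ρ₀)⁻¹ ≤ Ξ * Θ * 1 :=
          mul_le_mul_of_nonneg_left hinv1 (mul_nonneg hΞnn hΘnn)
        nlinarith
      refine le_trans ?_ (le_max_left _ _)
      calc (Ξ * Θ * (1 + lam * ρ₀)⁻¹) ^ 2 ≤ (M₁ * M₂) ^ 2 :=
            pow_le_pow_left₀ hDnn hD1 2
        _ = M₁ ^ 2 * M₂ ^ 2 := by ring
  -- main chain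
  intro k
  have hSinv := inv_mulVec_le (1 + H0 * CtilX * H0ᵀ) (1 + lam * ρ₀) hdpos hquad
    (H0 *ᵥ Xhat k - Z k)
  have hsplit : (Bhatᵀ * H0ᵀ * (1 + H0 * CtilX * H0ᵀ)⁻¹) *ᵥ (H0 *ᵥ Xhat k - Z k)
      = Bhatᵀ *ᵥ (H0ᵀ *ᵥ ((1 + H0 * CtilX * H0ᵀ)⁻¹ *ᵥ (H0 *ᵥ Xhat k - Z k))) := by
    rw [Matrix.mulVec_mulVec, Matrix.mulVec_mulVec]
  have hchain : Real.sqrt (enormSq ((Bhatᵀ * H0ᵀ * (1 + H0 * CtilX * H0ᵀ)⁻¹) *ᵥ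
        (H0 *ᵥ Xhat k - Z k)))
      ≤ Ξ * (specNorm H0 * ((1 + lam * ρ₀)⁻¹ * (Real.sqrt (K : ℝ) * Θ))) := by
    rw [hsplit, hΞ]
    calc Real.sqrt (enormSq (Bhatᵀ *ᵥ (H0ᵀ *ᵥ ((1 + H0 * CtilX * H0ᵀ)⁻¹ *ᵥ
            (H0 *ᵥ Xhat k - Z k)))))
        ≤ specNorm Bhat * Real.sqrt (enormSq (H0ᵀ *ᵥ ((1 + H0 * CtilX * H0ᵀ)⁻¹ *ᵥ
            (H0 *ᵥ Xhat k - Z k)))) := transpose_mulVec_le _ _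
      _ ≤ specNorm Bhat * (specNorm H0 * Real.sqrt (enormSq ((1 + H0 * CtilX * H0ᵀ)⁻¹ *ᵥ
            (H0 *ᵥ Xhat k - Z k)))) :=
          mul_le_mul_of_nonneg_left (transpose_mulVec_le _ _) (specNorm_nonneg _)
      _ ≤ specNorm Bhat * (specNorm H0 * ((1 + lam * ρ₀)⁻¹ *
            Real.sqrt (enormSq (H0 *ᵥ Xhat k - Z k)))) :=
          mul_le_mul_of_nonneg_left
            (mul_le_mul_of_nonneg_left hSinv (specNorm_nonneg _)) (specNorm_nonneg _)
      _ ≤ specNorm Bhat * (specNorm H0 * ((1 + lam * ρ₀)⁻¹ * (Real.sqrt (K : ℝ) * Θ))) := by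
          refine mul_le_mul_of_nonneg_left ?_ (specNorm_nonneg _)
          refine mul_le_mul_of_nonneg_left ?_ (specNorm_nonneg _)
          exact mul_le_mul_of_nonneg_left (hrk k) hαnn
  have hfin := pow_le_pow_left₀ (Real.sqrt_nonneg _) hchain 2
  rw [sqrt_enormSq_sq] at hfin
  have hsqK : Real.sqrt (K : ℝ) ^ 2 = (K : ℝ) := Real.sq_sqrt hKpos.le
  calc enormSq ((Bhatᵀ * H0ᵀ * (1 + H0 * CtilX * H0ᵀ)⁻¹) *ᵥ (H0 *ᵥ Xhat k - Z k))
      ≤ (Ξ * (specNorm H0 * ((1 + lam * ρ₀)⁻¹ * (Real.sqrt (K : ℝ) * Θ)))) ^ 2 := hfin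
    _ = Real.sqrt (K : ℝ) ^ 2 * specNorm H0 ^ 2 * (Ξ * Θ * (1 + lam * ρ₀)⁻¹) ^ 2 := by
        ring
    _ = (K : ℝ) * specNorm H0 ^ 2 * (Ξ * Θ * (1 + lam * ρ₀)⁻¹) ^ 2 := by
        rw [hsqK]
    _ ≤ (K : ℝ) * specNorm H0 ^ 2 * max (M₁ ^ 2 * M₂ ^ 2) (ρ₀⁻¹ ^ 2 * cphi⁻¹ ^ 2) := by
        refine mul_le_mul_of_nonneg_left hDsq ?_
        have := specNorm_nonneg H0
        positivity
end

section
/- (Lemma 5.4: minorization via controllability) Let Φ be a Markov transition kernel from ℝⁿ to ℝⁿ × ℝᵐ which has a jointly measurable density p(x, y) with respect to Lebesgue measure on ℝⁿ × ℝᵐ, and let Γ : ℝⁿ × ℝᵐ → ℝⁿ. Let C ⊂ ℝⁿ be compact and suppose there exist a point y* = (y₁*, y₂*) ∈ ℝⁿ × ℝᵐ, a constant β > 0, and an open neighborhood W of y* such that: (1) p(x, y) > β for all x ∈ C and all y ∈ W; (2) Γ is continuously differentiable on a neighborhood of y*, and the partial Jacobian of Γ with respect to the first (ℝⁿ) variable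 at y*, D_{y₁}Γ(y*), has nonzero determinant. Then there exist δ > 0 and an open neighborhood O₁ of Γ(y*) in ℝⁿ such that for every x ∈ C and every Borel set A ⊆ ℝⁿ, Φ(x, Γ⁻¹(A)) ≥ δ·Leb(A ∩ O₁), where Leb denotes Lebesgue measure on ℝⁿ. -/
/-!
Put `Ψ y = (Γ y, y₂)`. Its derivative at `y*` is block triangular with diagonal blocks
`D_{y₁}Γ(y*)` and the identity, hence onto, so `Ψ` maps a small neighbourhood `G ⊆ W` of `y*`,
on which `|det DΨ| < K`, onto a set containing a rectangle `O₁ × V`. For Borel `A`, the change of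
variables inequality on `(A ∩ O₁) × V ⊆ Ψ '' G` gives `Leb(A ∩ O₁) Leb(V) ≤ K Leb(G ∩ Γ⁻¹ A)`,
and `p > β` on `W` gives `β Leb(G ∩ Γ⁻¹ A) ≤ Φ(x, Γ⁻¹ A)`; so `δ = β Leb(V) / K` works.
-/

open MeasureTheory ProbabilityTheory ENNReal

open Filter Set Topology Function ContinuousLinearMap

theorem MeasurableSet.inter_preimage_of_continuousOn {α β : Type*} [TopologicalSpace α]
    [MeasurableSpace α] [OpensMeasurableSpace α] [TopologicalSpace β] [MeasurableSpace β]
    [BorelSpace β] {f : α → β} {U : Set α} {B : Set β} (hU : MeasurableSet U)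
    (hf : ContinuousOn f U) (hB : MeasurableSet B) : MeasurableSet (U ∩ f ⁻¹' B) := by
  have := hU.subtype_image (hf.domRestrict.measurable hB)
  rwa [domRestrict_eq, preimage_comp, Subtype.image_preimage_coe] at this

theorem ofReal_mul_le_setLIntegral_ofReal {α : Type*} [MeasurableSpace α] {μ : Measure α}
    {f : α → ℝ} {s : Set α} {c : ℝ} (hs : MeasurableSet s) (hf : ∀ y ∈ s, c ≤ f y) :
    ENNReal.ofReal c * μ s ≤ ∫⁻ y in s, ENNReal.ofReal (f y) ∂μ := by
  rw [← setLIntegral_const]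
  exact setLIntegral_mono' hs fun y hy => ENNReal.ofReal_le_ofReal (hf y hy)

theorem LinearMap.surjective_of_det_ne_zero {R M : Type*} [Field R] [AddCommGroup M]
    [Module R M] [FiniteDimensional R M] {f : M →ₗ[R] M} (hf : LinearMap.det f ≠ 0) :
    Surjective f :=
  ((Module.End.isUnit_iff f).1 ((LinearMap.isUnit_iff_isUnit_det f).2 hf.isUnit)).2

section OpenMapping

variable {𝕜 E F G : Type*} [NontriviallyNormedField 𝕜] [NormedAddCommGroup E] [NormedSpace 𝕜 E]
  [NormedAddCommGroup F] [NormedSpace 𝕜 F] [NormedAddCommGroup G] [NormedSpace 𝕜 G]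

theorem ContinuousLinearMap.surjective_prod_snd_of_surjective_comp_inl {L : E × F →L[𝕜] G}
    (hL : Surjective (L.comp (inl 𝕜 E F))) : Surjective (L.prod (snd 𝕜 E F)) := by
  rintro ⟨u, v⟩
  obtain ⟨a, ha⟩ := hL (u - L (0, v))
  refine ⟨(a, v), Prod.ext ?_ rfl⟩
  change L (a, v) = u
  rw [← eq_sub_iff_add_eq.1 ha, comp_apply, inl_apply, ← map_add, Prod.mk_add_mk, add_zero,
    zero_add]

theorem HasStrictFDerivAt.map_nhds_prodMk_snd_eq [CompleteSpace E] [CompleteSpace F]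
    [CompleteSpace G] {Γ : E × F → G} {L : E × F →L[𝕜] G} {y : E × F}
    (hΓ : HasStrictFDerivAt Γ L y) (hL : Surjective (L.comp (inl 𝕜 E F))) :
    map (fun z => (Γ z, z.2)) (𝓝 y) = 𝓝 (Γ y, y.2) :=
  (hΓ.prodMk hasStrictFDerivAt_snd).map_nhds_eq_of_surj
    (LinearMap.range_eq_top.2 (surjective_prod_snd_of_surjective_comp_inl hL))

end OpenMapping

section ChangeOfVariables

variable {E : Type*} [NormedAddCommGroup E] [NormedSpace ℝ E] [FiniteDimensional ℝ E]
  [MeasurableSpace E] [BorelSpace E] (μ : Measure E) [μ.IsAddHaarMeasure]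

theorem addHaar_image_le_mul_of_abs_det_fderiv_le {f : E → E} {f' : E → E →L[ℝ] E} {s : Set E}
    {K : ℝ} (hs : MeasurableSet s) (hf' : ∀ x ∈ s, HasFDerivWithinAt f (f' x) s x)
    (hK : ∀ x ∈ s, |(f' x).det| ≤ K) : μ (f '' s) ≤ ENNReal.ofReal K * μ s :=
  calc μ (f '' s) ≤ ∫⁻ x in s, ENNReal.ofReal |(f' x).det| ∂μ :=
        addHaar_image_le_lintegral_abs_det_fderiv μ hs hf'
    _ ≤ ∫⁻ _ in s, ENNReal.ofReal K ∂μ :=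
        setLIntegral_mono measurable_const fun x hx => ENNReal.ofReal_le_ofReal (hK x hx)
    _ = ENNReal.ofReal K * μ s := setLIntegral_const s _

theorem addHaar_le_mul_addHaar_inter_preimage {f : E → E} {G B : Set E} {K : ℝ} (hG : IsOpen G)
    (hf : DifferentiableOn ℝ f G) (hK : ∀ x ∈ G, |(fderiv ℝ f x).det| ≤ K)
    (hB : MeasurableSet B) (hBG : B ⊆ f '' G) : μ B ≤ ENNReal.ofReal K * μ (G ∩ f ⁻¹' B) := by
  have hfB : f '' (G ∩ f ⁻¹' B) = B := by rw [image_inter_preimage, inter_eq_right.2 hBG]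
  nth_rw 1 [← hfB]
  refine addHaar_image_le_mul_of_abs_det_fderiv_le μ
    (hG.measurableSet.inter_preimage_of_continuousOn hf.continuousOn hB) (fun x hx => ?_)
    fun x hx => hK x hx.1
  exact ((hf x hx.1).differentiableAt (hG.mem_nhds hx.1)).hasFDerivAt.hasFDerivWithinAt

end ChangeOfVariables

section ProductPreimage

variable {E F : Type*} [NormedAddCommGroup E] [NormedSpace ℝ E] [FiniteDimensional ℝ E]
  [MeasurableSpace E] [BorelSpace E] [NormedAddCommGroup F] [NormedSpace ℝ F]
  [FiniteDimensional ℝ F] [MeasurableSpace F] [BorelSpace F]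

theorem exists_pos_mul_measure_inter_le_prod_inter_preimage (μ : Measure E) [μ.IsAddHaarMeasure]
    (ν : Measure F) [ν.IsAddHaarMeasure] {Γ : E × F → E} {U : Set (E × F)} {y : E × F}
    (hU : IsOpen U) (hy : y ∈ U) (hΓ : ContDiffOn ℝ 1 Γ U)
    (hsurj : Surjective (fderiv ℝ (fun x => Γ (x, y.2)) y.1)) :
    ∃ c > (0 : ℝ), ∃ O : Set E, IsOpen O ∧ Γ y ∈ O ∧ ∀ A : Set E, MeasurableSet A →
      ENNReal.ofReal c * μ (A ∩ O) ≤ μ.prod ν (U ∩ Γ ⁻¹' A) := by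
  set Ψ : E × F → E × F := fun z => (Γ z, z.2)
  have hΨ : ContDiffOn ℝ 1 Ψ U := hΓ.prodMk contDiffOn_snd
  have hΓy : HasStrictFDerivAt Γ (fderiv ℝ Γ y) y :=
    (hΓ.contDiffAt (hU.mem_nhds hy)).hasStrictFDerivAt one_ne_zero
  have hpartial : fderiv ℝ (fun x => Γ (x, y.2)) y.1 = (fderiv ℝ Γ y).comp (inl ℝ E F) :=
    (hΓy.hasFDerivAt.comp y.1 (hasFDerivAt_prodMk_left y.1 y.2)).fderiv
  set K := |(fderiv ℝ Ψ y).det| + 1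
  have hK : 0 < K := by positivity
  have hdet : ∀ᶠ z in 𝓝 y, |(fderiv ℝ Ψ z).det| < K :=
    ((continuous_det.continuousAt.comp ((hΨ.continuousOn_fderiv_of_isOpen hU le_rfl).continuousAt
      (hU.mem_nhds hy))).abs).eventually_lt_const (lt_add_one _)
  obtain ⟨G, hGU, hG, hyG⟩ := eventually_nhds_iff.1 (hdet.and (hU.mem_nhds hy))
  have hΨG : Ψ '' G ∈ 𝓝 (Ψ y) := by
    rw [← hΓy.map_nhds_prodMk_snd_eq (hpartial ▸ hsurj)]
    exact image_mem_map (hG.mem_nhds hyG)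
  obtain ⟨O, V, hO, hyO, hV, hyV, hOV⟩ := mem_nhds_prod_iff'.1 hΨG
  set V' := V ∩ Metric.ball y.2 1
  have hV' : IsOpen V' := hV.inter Metric.isOpen_ball
  have hV'pos : 0 < ν V' := hV'.measure_pos ν ⟨y.2, hyV, Metric.mem_ball_self one_pos⟩
  have hV'fin : ν V' < ⊤ := (measure_mono inter_subset_right).trans_lt measure_ball_lt_top
  refine ⟨(ν V').toReal / K, div_pos (ENNReal.toReal_pos hV'pos.ne' hV'fin.ne) hK, O, hO, hyO,
    fun A hA => ?_⟩
  set B := (A ∩ O) ×ˢ V'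
  have hB : MeasurableSet B := (hA.inter hO.measurableSet).prod hV'.measurableSet
  have hrect : μ.prod ν B ≤ ENNReal.ofReal K * μ.prod ν (G ∩ Ψ ⁻¹' B) :=
    addHaar_le_mul_addHaar_inter_preimage _ hG
      ((hΨ.differentiableOn one_ne_zero).mono fun z hz => (hGU z hz).2)
      (fun z hz => (hGU z hz).1.le) hB fun z hz => hOV ⟨hz.1.2, hz.2.1⟩
  calc ENNReal.ofReal ((ν V').toReal / K) * μ (A ∩ O)
      = μ.prod ν B / ENNReal.ofReal K := by
        rw [Measure.prod_prod, ENNReal.ofReal_div_of_pos hK, ENNReal.ofReal_toReal hV'fin.ne,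
          mul_comm, mul_div_assoc]
    _ ≤ μ.prod ν (G ∩ Ψ ⁻¹' B) := ENNReal.div_le_of_le_mul' hrect
    _ ≤ μ.prod ν (U ∩ Γ ⁻¹' A) := measure_mono fun z hz => ⟨(hGU z hz.1).2, hz.2.1.1⟩

end ProductPreimage

theorem minorization_via_controllability_general {n m : ℕ}
    (Φ : Kernel (Fin n → ℝ) ((Fin n → ℝ) × (Fin m → ℝ)))
    (p : (Fin n → ℝ) → (Fin n → ℝ) × (Fin m → ℝ) → ℝ)
    (hpdens : ∀ x, ∀ B : Set ((Fin n → ℝ) × (Fin m → ℝ)), MeasurableSet B →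
      Φ x B = ∫⁻ y in B, ENNReal.ofReal (p x y))
    (Γ : (Fin n → ℝ) × (Fin m → ℝ) → (Fin n → ℝ))
    (C : Set (Fin n → ℝ))
    (ystar : (Fin n → ℝ) × (Fin m → ℝ)) (β : ℝ) (hβ : 0 < β)
    (W : Set ((Fin n → ℝ) × (Fin m → ℝ))) (hW : IsOpen W) (hyW : ystar ∈ W)
    (hreach : ∀ x ∈ C, ∀ y ∈ W, β < p x y)
    (hC1 : ∃ Wd ∈ nhds ystar, ContDiffOn ℝ 1 Γ Wd)
    (hjac : (LinearMap.det
      ((fderiv ℝ (fun x₁ => Γ (x₁, ystar.2)) ystar.1 :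
        (Fin n → ℝ) →L[ℝ] (Fin n → ℝ)) : (Fin n → ℝ) →ₗ[ℝ] (Fin n → ℝ))) ≠ 0) :
    ∃ δ > (0 : ℝ), ∃ O₁ : Set (Fin n → ℝ), IsOpen O₁ ∧ Γ ystar ∈ O₁ ∧
      ∀ x ∈ C, ∀ A : Set (Fin n → ℝ), MeasurableSet A →
        ENNReal.ofReal δ * volume (A ∩ O₁) ≤ Φ x (Γ ⁻¹' A) := by
  obtain ⟨Wd, hWd, hΓ⟩ := hC1
  set U := interior Wd ∩ W
  have hU : IsOpen U := isOpen_interior.inter hW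
  have hΓU : ContDiffOn ℝ 1 Γ U := hΓ.mono (inter_subset_left.trans interior_subset)
  obtain ⟨c, hc, O₁, hO₁, hyO₁, hminor⟩ :=
    exists_pos_mul_measure_inter_le_prod_inter_preimage volume volume hU
      ⟨mem_interior_iff_mem_nhds.2 hWd, hyW⟩ hΓU (LinearMap.surjective_of_det_ne_zero hjac)
  refine ⟨β * c, mul_pos hβ hc, O₁, hO₁, hyO₁, fun x hx A hA => ?_⟩
  have hUA : MeasurableSet (U ∩ Γ ⁻¹' A) :=
    hU.measurableSet.inter_preimage_of_continuousOn hΓU.continuousOn hA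
  calc ENNReal.ofReal (β * c) * volume (A ∩ O₁)
      = ENNReal.ofReal β * (ENNReal.ofReal c * volume (A ∩ O₁)) := by
        rw [ENNReal.ofReal_mul hβ.le, mul_assoc]
    _ ≤ ENNReal.ofReal β * volume (U ∩ Γ ⁻¹' A) := by
        rw [Measure.volume_eq_prod]; gcongr; exact hminor A hA
    _ ≤ ∫⁻ y in U ∩ Γ ⁻¹' A, ENNReal.ofReal (p x y) :=
        ofReal_mul_le_setLIntegral_ofReal hUA fun y hy => (hreach x hx y hy.1.2).le
    _ = Φ x (U ∩ Γ ⁻¹' A) := (hpdens x _ hUA).symm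
    _ ≤ Φ x (Γ ⁻¹' A) := measure_mono inter_subset_right

/-- **Minorization via controllability (Lemma 5.4).** Let `Φ` be a Markov kernel from
`ℝⁿ` to `ℝⁿ × ℝᵐ` with a jointly measurable density `p` with respect to Lebesgue measure,
and let `Γ : ℝⁿ × ℝᵐ → ℝⁿ` be measurable. Let `C ⊂ ℝⁿ` be compact and suppose there are a
point `y* = (y₁*, y₂*)`, a constant `β > 0` and an open neighborhood `W` of `y*` such that
(1) `p(x,y) > β` for all `x ∈ C`, `y ∈ W`; (2) `Γ` is `C¹` on a neighborhood of `y*` and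
the partial Jacobian `D_{y₁}Γ(y*)` has nonzero determinant. Then there exist `δ > 0` and
an open neighborhood `O₁` of `Γ(y*)` with `Φ(x, Γ⁻¹(A)) ≥ δ·Leb(A ∩ O₁)` for all `x ∈ C`
and all Borel `A ⊆ ℝⁿ`. -/
theorem minorization_via_controllability {n m : ℕ}
    (Φ : Kernel (Fin n → ℝ) ((Fin n → ℝ) × (Fin m → ℝ))) [IsMarkovKernel Φ]
    (p : (Fin n → ℝ) → (Fin n → ℝ) × (Fin m → ℝ) → ℝ)
    (hpmeas : Measurable fun z : (Fin n → ℝ) × ((Fin n → ℝ) × (Fin m → ℝ)) => p z.1 z.2)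
    (hpdens : ∀ x, ∀ B : Set ((Fin n → ℝ) × (Fin m → ℝ)), MeasurableSet B →
      Φ x B = ∫⁻ y in B, ENNReal.ofReal (p x y))
    (Γ : (Fin n → ℝ) × (Fin m → ℝ) → (Fin n → ℝ)) (hΓmeas : Measurable Γ)
    (C : Set (Fin n → ℝ)) (hC : IsCompact C)
    (ystar : (Fin n → ℝ) × (Fin m → ℝ)) (β : ℝ) (hβ : 0 < β)
    (W : Set ((Fin n → ℝ) × (Fin m → ℝ))) (hW : IsOpen W) (hyW : ystar ∈ W)
    (hreach : ∀ x ∈ C, ∀ y ∈ W, β < p x y)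
    (hC1 : ∃ Wd ∈ nhds ystar, ContDiffOn ℝ 1 Γ Wd)
    (hjac : (LinearMap.det
      ((fderiv ℝ (fun x₁ => Γ (x₁, ystar.2)) ystar.1 :
        (Fin n → ℝ) →L[ℝ] (Fin n → ℝ)) : (Fin n → ℝ) →ₗ[ℝ] (Fin n → ℝ))) ≠ 0) :
    ∃ δ > (0 : ℝ), ∃ O₁ : Set (Fin n → ℝ), IsOpen O₁ ∧ Γ ystar ∈ O₁ ∧
      ∀ x ∈ C, ∀ A : Set (Fin n → ℝ), MeasurableSet A →
        ENNReal.ofReal δ * volume (A ∩ O₁) ≤ Φ x (Γ ⁻¹' A) :=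
  minorization_via_controllability_general Φ p hpdens Γ C ystar β hβ W hW hyW hreach hC1 hjac
end
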